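/- Let j ≥ 4 and n ≥ 2 be integers. If m_j(K_{1,2}, P_4, (n−1)K_2) = ⌊2(n−1)/j⌋ + 1, then m_j(K_{1,2}, P_4, nK_2) ≤ ⌊2n/j⌋ + 1; that is, with t = ⌊2n/j⌋ + 1, every 3-coloring of the edges of K_{j×t} contains a copy of K_{1,2} in the first color, or a copy of P_4 in the second color, or a matching nK_2 in the third color. -/

import Mathlib

open SimpleGraph

/-- The complete multipartite graph `K_{j x t}` with `j` parts, each of size `t`. -/
def multiK (j t : ℕ) : SimpleGraph (Fin j × Fin t) where
  Adj a b := a.1 ≠ b.1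
  symm := ⟨fun _ _ h => Ne.symm h⟩
  loopless := ⟨fun _ h => h rfl⟩

/-- `G` contains a copy of `H`. -/
def Contains {α β : Type*} (G : SimpleGraph α) (H : SimpleGraph β) : Prop :=
  ∃ f : β → α, Function.Injective f ∧ ∀ ⦃a b⦄, H.Adj a b → G.Adj (f a) (f b)

/-- The monochromatic subgraph of `G` in color `i` under the edge-coloring `c`. -/
def colorClass {α : Type*} {k : ℕ} (G : SimpleGraph α) (c : Sym2 α → Fin k) (i : Fin k) :
    SimpleGraph α where
  Adj a b := G.Adj a b ∧ c s(a, b) = i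
  symm := ⟨fun _ _ h => ⟨h.1.symm, by rw [Sym2.eq_swap]; exact h.2⟩⟩
  loopless := ⟨fun _ h => G.irrefl h.1⟩

/-- The stripe `nK₂`: the graph consisting of `n` pairwise disjoint edges. -/
def stripe (n : ℕ) : SimpleGraph (Fin n × Fin 2) where
  Adj a b := a.1 = b.1 ∧ a.2 ≠ b.2
  symm := ⟨fun _ _ h => ⟨h.1.symm, h.2.symm⟩⟩
  loopless := ⟨fun _ h => h.2 rfl⟩

/-- Every 3-coloring of the edges of `K_{j x t}` yields a copy of `K_{1,2}` in color 0,
or of `P₄` in color 1, or of `nK₂` in color 2. -/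
def Arrows3 (j t n : ℕ) : Prop :=
  ∀ c : Sym2 (Fin j × Fin t) → Fin 3,
    Contains (colorClass (multiK j t) c 0) (pathGraph 3) ∨
    Contains (colorClass (multiK j t) c 1) (pathGraph 4) ∨
    Contains (colorClass (multiK j t) c 2) (stripe n)

/-- Every 2-coloring of the edges of `K_{j x t}` yields a copy of `nK₂` in color 0
or of `C₇` in color 1. -/
def ArrowsC7 (j t n : ℕ) : Prop :=
  ∀ c : Sym2 (Fin j × Fin t) → Fin 2,
    Contains (colorClass (multiK j t) c 0) (stripe n) ∨
    Contains (colorClass (multiK j t) c 1) (cycleGraph 7)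

/-!
Write `R`, `B`, `G` for the colour classes and suppose there is no red `K_{1,2}` and no blue `P_4`.
By hypothesis and monotonicity in the part size, there is a green `(n-1)K_2`, given by a matching
`f`; since `jt ≥ 2n + 1`, at least three vertices `U` are unmatched. If there is no green `nK_2`,
then no green edge lies inside `U` and no green path `a–x–y–b` with `xy` matched and `a ≠ b` in `U`
exists. If `U` meets three parts, a diamond in `U` (when `|U| ≥ 4`) or a blue path `u–m–v` inside
the triangle `U` together with a matched edge avoiding the parts of `u` and `v` (when `|U| = 3`)
yields a red `K_{1,2}` or a blue `P_4`. Otherwise `U` lies in two parts, at least two matched edges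
avoid those parts, and all but at most one vertex of `U` has a blue edge to each of them; so some
`p ∈ U` has blue edges to both. By `P_4`-freeness the blue neighbours of `p` are leaves, and this
forces a red edge from `p` into each of the two matched edges: a red `K_{1,2}` at `p`.
-/

open Finset

section Contains
variable {α β : Type*}

theorem contains_iff_isContained {G : SimpleGraph α} {H : SimpleGraph β} :
    Contains G H ↔ H ⊑ G :=
  ⟨fun ⟨f, hf, h⟩ => ⟨⟨⟨f, fun hab => h hab⟩, hf⟩⟩,
    fun ⟨e⟩ => ⟨e, e.injective, fun _ _ h => e.toHom.map_adj h⟩⟩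

theorem contains_pathGraph_three {G : SimpleGraph α} {x v y : α} (h₁ : G.Adj x v)
    (h₂ : G.Adj v y) (hxy : x ≠ y) : Contains G (pathGraph 3) :=
  contains_iff_isContained.2 <|
    (Walk.IsPath.isContained_pathGraph (w := .cons h₁ (.cons h₂ .nil)) (by
      simp [Walk.cons_isPath_iff, hxy, h₁.ne, h₂.ne]))

theorem contains_pathGraph_four {G : SimpleGraph α} {a b d e : α} (h₁ : G.Adj a b)
    (h₂ : G.Adj b d) (h₃ : G.Adj d e) (had : a ≠ d) (hbe : b ≠ e) (hae : a ≠ e) :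
    Contains G (pathGraph 4) :=
  contains_iff_isContained.2 <|
    (Walk.IsPath.isContained_pathGraph (w := .cons h₁ (.cons h₂ (.cons h₃ .nil))) (by
      simp [Walk.cons_isPath_iff, had, hbe, hae, h₁.ne, h₂.ne, h₃.ne]))

end Contains

section Stripe
variable {α : Type*} {G : SimpleGraph α} {k : ℕ}

theorem contains_stripe_iff : Contains G (stripe k) ↔
    ∃ f : Fin k × Fin 2 → α, Function.Injective f ∧ ∀ i, G.Adj (f (i, 0)) (f (i, 1)) := by
  refine ⟨fun ⟨f, hf, h⟩ => ⟨f, hf, fun i => h ⟨rfl, zero_ne_one⟩⟩, fun ⟨f, hf, h⟩ => ⟨f, hf, ?_⟩⟩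
  rintro ⟨i, a⟩ ⟨i', b⟩ ⟨rfl : i = i', hab⟩
  fin_cases a <;> fin_cases b <;> simp_all [(h i).symm]

theorem contains_stripe_succ_of_adj {f : Fin k × Fin 2 → α} (hf : Function.Injective f)
    (hfG : ∀ i, G.Adj (f (i, 0)) (f (i, 1))) {u v : α} (hu : u ∉ Set.range f)
    (hv : v ∉ Set.range f) (huv : G.Adj u v) : Contains G (stripe (k + 1)) := by
  refine contains_stripe_iff.2
    ⟨fun p => Fin.lastCases (![u, v] p.2) (fun i => f (i, p.2)) p.1, ?_, fun i => ?_⟩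
  · rintro ⟨i, a⟩ ⟨i', b⟩ h
    induction i using Fin.lastCases <;> induction i' using Fin.lastCases <;>
      simp only [Fin.lastCases_last, Fin.lastCases_castSucc] at h
    · fin_cases a <;> fin_cases b <;> simp_all [huv.ne, huv.ne.symm]
    · fin_cases a
      exacts [(hu ⟨_, h.symm⟩).elim, (hv ⟨_, h.symm⟩).elim]
    · fin_cases b
      exacts [(hu ⟨_, h⟩).elim, (hv ⟨_, h⟩).elim]
    · simp_all [hf.eq_iff]
  · induction i using Fin.lastCases <;> simp [huv, hfG]

theorem contains_stripe_succ_of_augmenting {f : Fin k × Fin 2 → α} (hf : Function.Injective f)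
    (hfG : ∀ i, G.Adj (f (i, 0)) (f (i, 1))) {u v : α} (hu : u ∉ Set.range f)
    (hv : v ∉ Set.range f) (huv : u ≠ v) (i : Fin k) (hux : G.Adj u (f (i, 0)))
    (hvy : G.Adj v (f (i, 1))) : Contains G (stripe (k + 1)) := by
  classical
  -- replace `f (i, 1)` by `u`, then match the freed vertex `f (i, 1)` with `v`
  set σ := Equiv.swap (f (i, 1)) u
  have hσ : ∀ p, p ≠ (i, 1) → σ (f p) = f p := fun p hp =>
    Equiv.swap_apply_of_ne_of_ne (hf.ne hp) (fun h => hu ⟨p, h⟩)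
  refine contains_stripe_succ_of_adj (f := σ ∘ f) (σ.injective.comp hf) (fun i' => ?_)
    (u := v) (v := f (i, 1)) ?_ ?_ hvy
  · by_cases hi : i' = i
    · subst hi
      simpa [hσ _ (by simp : (i', (0 : Fin 2)) ≠ (i', 1)), σ] using hux.symm
    · simpa [hσ _ (by simp [hi] : (i', (0 : Fin 2)) ≠ (i, 1)),
        hσ _ (by simp [hi] : (i', (1 : Fin 2)) ≠ (i, 1))] using hfG i'
  · rintro ⟨p, hp⟩
    rw [Function.comp_apply, Equiv.swap_apply_eq_iff,
      Equiv.swap_apply_of_ne_of_ne (fun h => hv ⟨_, h.symm⟩) huv.symm] at hp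
    exact hv ⟨p, hp⟩
  · rintro ⟨p, hp⟩
    rw [Function.comp_apply, Equiv.swap_apply_eq_iff, Equiv.swap_apply_left] at hp
    exact hu ⟨p, hp⟩

end Stripe

section Admissible
variable {α : Type*}

/-- `R`, `B`, `G` stand for the red, blue and green colour classes (colours `0`, `1`, `2`) of a
colouring of `K`. -/
structure IsAdmissible (K R B G : SimpleGraph α) : Prop where
  le_sup : K ≤ R ⊔ B ⊔ G
  red_free : ¬Contains R (pathGraph 3)
  blue_free : ¬Contains B (pathGraph 4)

/-- For a matched edge `xy` of `G` and the unmatched vertices `U`: there is no augmenting path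
`a–x–y–b`. -/
def NoAugmentingPath (G : SimpleGraph α) (U : Set α) (x y : α) : Prop :=
  ∀ ⦃a b⦄, a ∈ U → b ∈ U → a ≠ b → G.Adj a x → G.Adj b y → False

variable {K R B G : SimpleGraph α} {U : Set α} {a a' b c d m u v w x y z : α}

theorem NoAugmentingPath.symm (h : NoAugmentingPath G U x y) : NoAugmentingPath G U y x :=
  fun _ _ ha hb hab hay hbx => h hb ha hab.symm hbx hay

namespace IsAdmissible

theorem eq_of_red_adj (hC : IsAdmissible K R B G) (hx : R.Adj v x) (hy : R.Adj v y) : x = y :=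
  by_contra fun hxy => hC.red_free (contains_pathGraph_three hx.symm hy hxy)

theorem not_blue_adj_of_blue_adj (hC : IsAdmissible K R B G) (hx : B.Adj u x) (hz : B.Adj u z)
    (hxz : x ≠ z) (hau : a ≠ u) (haz : a ≠ z) : ¬B.Adj a x :=
  fun hax => hC.blue_free (contains_pathGraph_four hax hx.symm hz hau hxz haz)

theorem red_or_green (hC : IsAdmissible K R B G) (h : K.Adj u v) (hb : ¬B.Adj u v) :
    R.Adj u v ∨ G.Adj u v := by
  rcases hC.le_sup h with (h | h) | h <;> tauto

theorem red_or_blue (hC : IsAdmissible K R B G) (h : K.Adj u v) (hg : ¬G.Adj u v) :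
    R.Adj u v ∨ B.Adj u v := by
  rcases hC.le_sup h with (h | h) | h <;> tauto

theorem blue_of_noAugmentingPath (hC : IsAdmissible K R B G) (hxy : NoAugmentingPath G U x y)
    (hne : x ≠ y) (hu : u ∈ U) (hv : v ∈ U) (huv : u ≠ v) (hux : K.Adj u x) (huy : K.Adj u y)
    (hvx : K.Adj v x) (hvy : K.Adj v y) :
    (B.Adj u x ∨ B.Adj u y) ∨ (B.Adj v x ∨ B.Adj v y) := by
  by_contra! h
  obtain ⟨⟨bux, buy⟩, bvx, bvy⟩ := h
  rcases hC.red_or_green hux bux with rux | gux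
  · have guy := (hC.red_or_green huy buy).resolve_left fun ruy => hne (hC.eq_of_red_adj rux ruy)
    have rvx := (hC.red_or_green hvx bvx).resolve_right fun gvx => hxy hv hu huv.symm gvx guy
    exact huv (hC.eq_of_red_adj rux.symm rvx.symm)
  · have rvy := (hC.red_or_green hvy bvy).resolve_right fun gvy => hxy hu hv huv gux gvy
    have gvx := (hC.red_or_green hvx bvx).resolve_left fun rvx => hne (hC.eq_of_red_adj rvx rvy)
    have ruy := (hC.red_or_green huy buy).resolve_right fun guy => hxy hv hu huv.symm gvx guy
    exact huv (hC.eq_of_red_adj ruy.symm rvy.symm)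

theorem red_adj_of_noAugmentingPath (hC : IsAdmissible K R B G) (hxy : NoAugmentingPath G U x y)
    (hu : u ∈ U) (hv : v ∈ U) (hw : w ∈ U) (huv : u ≠ v) (huw : u ≠ w) (hvw : v ≠ w)
    (huy : K.Adj u y) (hvx : K.Adj v x) (hwx : K.Adj w x)
    (buy : ¬B.Adj u y) (bvx : ¬B.Adj v x) (bwx : ¬B.Adj w x) : R.Adj u y := by
  refine (hC.red_or_green huy buy).resolve_right fun guy => hvw ?_
  have rvx := (hC.red_or_green hvx bvx).resolve_right fun gvx => hxy hv hu huv.symm gvx guy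
  have rwx := (hC.red_or_green hwx bwx).resolve_right fun gwx => hxy hw hu huw.symm gwx guy
  exact hC.eq_of_red_adj rvx.symm rwx.symm

theorem false_of_blue_path (hC : IsAdmissible K R B G) (hxy : NoAugmentingPath G U x y)
    (hne : x ≠ y) (hu : u ∈ U) (hv : v ∈ U) (huv : u ≠ v) (hum : B.Adj u m) (hmv : B.Adj m v)
    (hxm : x ≠ m) (hym : y ≠ m) (hux : K.Adj u x) (huy : K.Adj u y) (hvx : K.Adj v x)
    (hvy : K.Adj v y) : False := by
  have end_u : ∀ z, z ≠ m → K.Adj v z → ¬B.Adj u z := fun z hzm hvz buz =>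
    hC.blue_free (contains_pathGraph_four buz.symm hum hmv hzm huv hvz.ne.symm)
  have end_v : ∀ z, z ≠ m → K.Adj u z → ¬B.Adj v z := fun z hzm huz bvz =>
    hC.blue_free (contains_pathGraph_four bvz.symm hmv.symm hum.symm hzm huv.symm huz.ne.symm)
  rcases hC.blue_of_noAugmentingPath hxy hne hu hv huv hux huy hvx hvy with (h | h) | (h | h)
  exacts [end_u x hxm hvx h, end_u y hym hvy h, end_v x hxm hux h, end_v y hym huy h]

theorem false_of_diamond (hC : IsAdmissible K R B G) (hGU : ∀ a ∈ U, ∀ b ∈ U, ¬G.Adj a b)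
    (ha : a ∈ U) (ha' : a' ∈ U) (hb : b ∈ U) (hd : d ∈ U) (haa' : a ≠ a')
    (hab : K.Adj a b) (had : K.Adj a d) (ha'b : K.Adj a' b) (ha'd : K.Adj a' d)
    (hbd : K.Adj b d) : False := by
  have col : ∀ {u v}, u ∈ U → v ∈ U → K.Adj u v → R.Adj u v ∨ B.Adj u v :=
    fun hu hv huv => hC.red_or_blue huv (hGU _ hu _ hv)
  rcases col hb hd hbd with rbd | bbd
  · have bab := (col ha hb hab).resolve_left fun r => had.ne (hC.eq_of_red_adj r.symm rbd)
    have bad := (col ha hd had).resolve_left fun r => hab.ne (hC.eq_of_red_adj r.symm rbd.symm)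
    have ba'd := (col ha' hd ha'd).resolve_left fun r => ha'b.ne (hC.eq_of_red_adj r.symm rbd.symm)
    exact hC.blue_free (contains_pathGraph_four bab.symm bad ba'd.symm hbd.ne haa' ha'b.ne.symm)
  have h₁ : R.Adj a b ∨ R.Adj a' d := by
    refine (col ha hb hab).imp_right fun bab => (col ha' hd ha'd).resolve_right fun ba'd => ?_
    exact hC.blue_free (contains_pathGraph_four bab bbd ba'd.symm had.ne ha'b.ne.symm haa')
  have h₂ : R.Adj a' b ∨ R.Adj a d := by
    refine (col ha' hb ha'b).imp_right fun ba'b => (col ha hd had).resolve_right fun bad => ?_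
    exact hC.blue_free (contains_pathGraph_four ba'b bbd bad.symm ha'd.ne hab.ne.symm haa'.symm)
  rcases h₁ with h₁ | h₁ <;> rcases h₂ with h₂ | h₂
  · exact haa' (hC.eq_of_red_adj h₁.symm h₂.symm)
  · exact hbd.ne (hC.eq_of_red_adj h₁ h₂)
  · exact hbd.ne (hC.eq_of_red_adj h₂ h₁)
  · exact haa' (hC.eq_of_red_adj h₂.symm h₁.symm)

theorem blue_path_of_triangle (hC : IsAdmissible K R B G) (hGU : ∀ a ∈ U, ∀ b ∈ U, ¬G.Adj a b)
    (ha : a ∈ U) (hb : b ∈ U) (hc : c ∈ U) (hab : K.Adj a b) (hbc : K.Adj b c) (hac : K.Adj a c) :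
    (B.Adj a b ∧ B.Adj b c) ∨ (B.Adj b a ∧ B.Adj a c) ∨ (B.Adj a c ∧ B.Adj c b) := by
  have col : ∀ {u v}, u ∈ U → v ∈ U → K.Adj u v → R.Adj u v ∨ B.Adj u v :=
    fun hu hv huv => hC.red_or_blue huv (hGU _ hu _ hv)
  rcases col ha hb hab with rab | bab
  · have bbc := (col hb hc hbc).resolve_left fun rbc => hac.ne (hC.eq_of_red_adj rab.symm rbc)
    have bac := (col ha hc hac).resolve_left fun rac => hbc.ne (hC.eq_of_red_adj rab rac)
    exact .inr (.inr ⟨bac, bbc.symm⟩)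
  rcases col hb hc hbc with rbc | bbc
  · have bac := (col ha hc hac).resolve_left fun rac => hab.ne (hC.eq_of_red_adj rac.symm rbc.symm)
    exact .inr (.inl ⟨bab.symm, bac⟩)
  exact .inl ⟨bab, bbc⟩

end IsAdmissible

end Admissible

theorem and_or_and_or_and_of_or {A B C A' B' C' : Prop} (h₁ : A ∨ B) (h₂ : A ∨ C) (h₃ : B ∨ C)
    (h₁' : A' ∨ B') (h₂' : A' ∨ C') (h₃' : B' ∨ C') : (A ∧ A') ∨ (B ∧ B') ∨ (C ∧ C') := by
  tauto

section Fan
variable {α ι : Type*} {K R B G : SimpleGraph α}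

/-- The matched edges indexed by `E` are joined in `K` to every vertex of `U`, a set of vertices
left unmatched by `f`. -/
structure IsFan (K G : SimpleGraph α) (U : Finset α) (f : ι × Fin 2 → α) (E : Set ι) : Prop where
  injective : Function.Injective f
  disjoint : ∀ a ∈ U, a ∉ Set.range f
  noAugmentingPath : ∀ i ∈ E, NoAugmentingPath G U (f (i, 0)) (f (i, 1))
  adj : ∀ a ∈ U, ∀ i ∈ E, ∀ b, K.Adj a (f (i, b))

namespace IsFan
variable {U : Finset α} {f : ι × Fin 2 → α} {E : Set ι} {i i' : ι} {p q u v w : α}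

theorem noAugmentingPath_of_ne (hF : IsFan K G U f E) (hi : i ∈ E) {b b' : Fin 2} (hb : b ≠ b') :
    NoAugmentingPath G U (f (i, b)) (f (i, b')) := by
  fin_cases b <;> fin_cases b'
  exacts [absurd rfl hb, hF.noAugmentingPath i hi, (hF.noAugmentingPath i hi).symm, absurd rfl hb]

theorem exists_blue_adj_or (hF : IsFan K G U f E) (hC : IsAdmissible K R B G) (hi : i ∈ E)
    (hu : u ∈ U) (hv : v ∈ U) (huv : u ≠ v) :
    (∃ b, B.Adj u (f (i, b))) ∨ ∃ b, B.Adj v (f (i, b)) := by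
  rcases hC.blue_of_noAugmentingPath (hF.noAugmentingPath i hi) (hF.injective.ne (by simp)) hu hv
    huv (hF.adj u hu i hi 0) (hF.adj u hu i hi 1) (hF.adj v hv i hi 0) (hF.adj v hv i hi 1)
    with (h | h) | (h | h)
  exacts [.inl ⟨0, h⟩, .inl ⟨1, h⟩, .inr ⟨0, h⟩, .inr ⟨1, h⟩]

theorem exists_red_adj (hF : IsFan K G U f E) (hC : IsAdmissible K R B G) (hi : i ∈ E)
    (hp : p ∈ U) (hq : q ∈ U) (hw : w ∈ U) (hpq : p ≠ q) (hpw : p ≠ w) (hqw : q ≠ w)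
    (hpi : ∃ b, B.Adj p (f (i, b))) (hpi' : ∃ b, B.Adj p (f (i', b))) (hii' : i ≠ i')
    (hqi : ∃ b, B.Adj q (f (i, b))) : ∃ b, R.Adj p (f (i, b)) := by
  -- `p` has two blue neighbours, so `f (i, b)` is a blue leaf and `q` is blue to `f (i, b')`.
  obtain ⟨b, hpb⟩ := hpi
  obtain ⟨b₁, hpb₁⟩ := hpi'
  obtain ⟨b', hqb'⟩ := hqi
  have hfree : ∀ a ∈ U, ∀ c, a ≠ f c := fun a ha c h => hF.disjoint a ha ⟨c, h.symm⟩
  have leaf : ∀ a ∈ U, a ≠ p → ¬B.Adj a (f (i, b)) := fun a ha hap =>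
    hC.not_blue_adj_of_blue_adj hpb hpb₁ (hF.injective.ne (by simp [hii'])) hap (hfree a ha _)
  have hbb' : b ≠ b' := by
    rintro rfl
    exact leaf q hq hpq.symm hqb'
  have bpy : ¬B.Adj p (f (i, b')) := fun h => hC.blue_free (contains_pathGraph_four hqb' h.symm hpb
    hpq.symm (hF.injective.ne (by simp [hbb'.symm])) (hfree q hq _))
  exact ⟨b', hC.red_adj_of_noAugmentingPath (hF.noAugmentingPath_of_ne hi hbb') hp hq hw hpq hpw
    hqw (hF.adj p hp i hi b') (hF.adj q hq i hi b) (hF.adj w hw i hi b) bpy (leaf q hq hpq.symm)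
    (leaf w hw hpw.symm)⟩

theorem false_of_blue_adj_two_edges (hF : IsFan K G U f E) (hC : IsAdmissible K R B G) (hi : i ∈ E)
    (hi' : i' ∈ E) (hii' : i ≠ i') (hp : p ∈ U) (hq : q ∈ U) (hw : w ∈ U) (hpq : p ≠ q)
    (hpw : p ≠ w) (hqw : q ≠ w) (hpi : ∃ b, B.Adj p (f (i, b)))
    (hpi' : ∃ b, B.Adj p (f (i', b))) : False := by
  have red_into : ∀ {e e'}, e ∈ E → e ≠ e' → (∃ b, B.Adj p (f (e, b))) →
      (∃ b, B.Adj p (f (e', b))) → ∃ b, R.Adj p (f (e, b)) := by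
    intro e e' he hee' hpe hpe'
    rcases hF.exists_blue_adj_or hC he hq hw hqw with hqe | hwe
    · exact hF.exists_red_adj hC he hp hq hw hpq hpw hqw hpe hpe' hee' hqe
    · exact hF.exists_red_adj hC he hp hw hq hpw hpq hqw.symm hpe hpe' hee' hwe
  obtain ⟨b, hb⟩ := red_into hi hii' hpi hpi'
  obtain ⟨b', hb'⟩ := red_into hi' hii'.symm hpi' hpi
  exact hii' (congrArg Prod.fst (hF.injective (hC.eq_of_red_adj hb hb')))

theorem false_of_two_edges (hF : IsFan K G U f E) (hC : IsAdmissible K R B G) (hU : 2 < #U)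
    (hi : i ∈ E) (hi' : i' ∈ E) (hii' : i ≠ i') : False := by
  obtain ⟨a, b, c, ha, hb, hc, hab, hac, hbc⟩ := Finset.two_lt_card_iff.1 hU
  -- each of the two edges is missed by at most one of `a`, `b`, `c`
  have := and_or_and_or_and_of_or (hF.exists_blue_adj_or hC hi ha hb hab)
    (hF.exists_blue_adj_or hC hi ha hc hac) (hF.exists_blue_adj_or hC hi hb hc hbc)
    (hF.exists_blue_adj_or hC hi' ha hb hab) (hF.exists_blue_adj_or hC hi' ha hc hac)
    (hF.exists_blue_adj_or hC hi' hb hc hbc)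
  rcases this with ⟨h, h'⟩ | ⟨h, h'⟩ | ⟨h, h'⟩
  · exact hF.false_of_blue_adj_two_edges hC hi hi' hii' ha hb hc hab hac hbc h h'
  · exact hF.false_of_blue_adj_two_edges hC hi hi' hii' hb ha hc hab.symm hbc hac h h'
  · exact hF.false_of_blue_adj_two_edges hC hi hi' hii' hc ha hb hac.symm hbc.symm hab h h'

end IsFan

end Fan

section Multipartite
variable {j t k : ℕ} {R B G : SimpleGraph (Fin j × Fin t)}

theorem card_touching_add_card_unmatched_le {f : Fin k × Fin 2 → Fin j × Fin t}
    (hf : Function.Injective f) (S : Finset (Fin j)) :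
    #{i | ∃ b, (f (i, b)).1 ∈ S} + #{a ∈ (univ.image f)ᶜ | a.1 ∈ S} ≤ #S * t := by
  classical
  have h₁ : #{i | ∃ b, (f (i, b)).1 ∈ S} ≤ #{a ∈ univ.image f | a.1 ∈ S} := by
    refine card_le_card_of_injOn (fun i => f (i, if (f (i, 0)).1 ∈ S then 0 else 1)) ?_ ?_
    · intro i hi
      obtain ⟨b, hb⟩ : ∃ b, (f (i, b)).1 ∈ S := by simpa using hi
      refine mem_coe.2 (mem_filter.2 ⟨mem_image_of_mem _ (mem_univ _), ?_⟩)
      dsimp only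
      split_ifs with h
      · exact h
      · fin_cases b
        exacts [absurd hb h, hb]
    · intro i _ i' _ h
      exact congrArg Prod.fst (hf h)
  have h₂ : #{a ∈ univ.image f | a.1 ∈ S} + #{a ∈ (univ.image f)ᶜ | a.1 ∈ S} =
      #{a : Fin j × Fin t | a.1 ∈ S} := by
    rw [← card_union_of_disjoint (disjoint_filter_filter (disjoint_compl_right))]
    congr 1
    ext a
    by_cases ha : a ∈ univ.image f <;> simp [ha]
  have h₃ : #{a : Fin j × Fin t | a.1 ∈ S} = #S * t := by
    rw [show ({a : Fin j × Fin t | a.1 ∈ S} : Finset _) = S ×ˢ univ by ext; simp, card_product,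
      card_univ, Fintype.card_fin]
  omega

theorem false_of_unmatched_blue_path (hC : IsAdmissible (multiK j t) R B G)
    {f : Fin k × Fin 2 → Fin j × Fin t} (hf : Function.Injective f)
    (hsafe : ∀ i, NoAugmentingPath G ↑(univ.image f)ᶜ (f (i, 0)) (f (i, 1)))
    (hkt : 2 * t ≤ k + 1) {u m v : Fin j × Fin t} (hu : u ∈ (univ.image f)ᶜ)
    (hm : m ∈ (univ.image f)ᶜ) (hv : v ∈ (univ.image f)ᶜ) (huv : u.1 ≠ v.1) (hum : B.Adj u m)
    (hmv : B.Adj m v) : False := by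
  have hcount := card_touching_add_card_unmatched_le hf {u.1, v.1}
  have hfree : 2 ≤ #{a ∈ (univ.image f)ᶜ | a.1 ∈ ({u.1, v.1} : Finset _)} := by
    calc 2 = #({u, v} : Finset _) := (card_pair (ne_of_apply_ne Prod.fst huv)).symm
      _ ≤ _ := card_le_card fun a ha => by
        rcases mem_insert.1 ha with rfl | ha
        · simp [hu]
        · rw [mem_singleton.1 ha]
          simp [hv]
  rw [card_pair huv] at hcount
  obtain ⟨i, -, hi⟩ := exists_mem_notMem_of_card_lt_card
    (s := {i | ∃ b, (f (i, b)).1 ∈ ({u.1, v.1} : Finset _)}) (t := univ)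
    (by rw [card_univ, Fintype.card_fin]; omega)
  simp only [mem_filter, mem_univ, true_and, mem_insert, mem_singleton, not_exists,
    not_or] at hi
  have hmf : ∀ c, f c ≠ m := by simpa using hm
  exact hC.false_of_blue_path (hsafe i) (hf.ne (by simp)) hu hv (ne_of_apply_ne Prod.fst huv)
    hum hmv (hmf _) (hmf _) (Ne.symm (hi 0).1) (Ne.symm (hi 1).1) (Ne.symm (hi 0).2)
    (Ne.symm (hi 1).2)

theorem card_unmatched_add {f : Fin k × Fin 2 → Fin j × Fin t} (hf : Function.Injective f) :
    #(univ.image f)ᶜ + 2 * k = j * t := by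
  have := card_compl_add_card (univ.image f)
  simp only [card_image_of_injective _ hf, card_univ, Fintype.card_prod, Fintype.card_fin] at this
  rwa [mul_comm 2]

theorem false_of_diamond_of_three_parts (hC : IsAdmissible (multiK j t) R B G)
    {U : Finset (Fin j × Fin t)} (hGU : ∀ a ∈ U, ∀ b ∈ U, ¬G.Adj a b) (hU : 3 < #U)
    {a b c : Fin j × Fin t} (ha : a ∈ U) (hb : b ∈ U) (hc : c ∈ U) (hab : a.1 ≠ b.1)
    (hac : a.1 ≠ c.1) (hbc : b.1 ≠ c.1) : False := by
  obtain ⟨d, hd, hdabc⟩ :=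
    exists_mem_notMem_of_card_lt_card (s := {a, b, c}) (card_le_three.trans_lt hU)
  simp only [mem_insert, mem_singleton, not_or] at hdabc
  by_cases hdb : d.1 = b.1
  · exact hC.false_of_diamond hGU hb hd ha hc (Ne.symm hdabc.2.1) (Ne.symm hab) hbc
      (fun h => hab (h.symm.trans hdb)) (fun h => hbc (hdb.symm.trans h)) hac
  by_cases hdc : d.1 = c.1
  · exact hC.false_of_diamond hGU hc hd ha hb (Ne.symm hdabc.2.2) (Ne.symm hac) (Ne.symm hbc)
      (fun h => hac (h.symm.trans hdc)) (fun h => hbc (h.symm.trans hdc)) hab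
  · exact hC.false_of_diamond hGU ha hd hb hc (Ne.symm hdabc.1) hab hac hdb hdc hbc

theorem false_of_three_parts (hj : 4 ≤ j) (hC : IsAdmissible (multiK j t) R B G)
    {f : Fin k × Fin 2 → Fin j × Fin t} (hf : Function.Injective f)
    (hGU : ∀ a ∈ (univ.image f)ᶜ, ∀ b ∈ (univ.image f)ᶜ, ¬G.Adj a b)
    (hsafe : ∀ i, NoAugmentingPath G ↑(univ.image f)ᶜ (f (i, 0)) (f (i, 1)))
    (hS : 2 < #((univ.image f)ᶜ.image Prod.fst)) : False := by
  obtain ⟨_, _, _, hpa, hpb, hpc, hab, hac, hbc⟩ := two_lt_card_iff.1 hS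
  obtain ⟨a, ha, rfl⟩ := mem_image.1 hpa
  obtain ⟨b, hb, rfl⟩ := mem_image.1 hpb
  obtain ⟨c, hc, rfl⟩ := mem_image.1 hpc
  by_cases hU : 3 < #(univ.image f)ᶜ
  · exact false_of_diamond_of_three_parts hC hGU hU ha hb hc hab hac hbc
  have hkt : 2 * t ≤ k + 1 := by
    have := card_unmatched_add hf
    have := Nat.mul_le_mul_right t hj
    omega
  rcases hC.blue_path_of_triangle hGU ha hb hc hab hbc hac with ⟨h₁, h₂⟩ | ⟨h₁, h₂⟩ | ⟨h₁, h₂⟩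
  · exact false_of_unmatched_blue_path hC hf hsafe hkt ha hb hc hac h₁ h₂
  · exact false_of_unmatched_blue_path hC hf hsafe hkt hb ha hc hbc h₁ h₂
  · exact false_of_unmatched_blue_path hC hf hsafe hkt ha hc hb hab h₁ h₂

theorem false_of_two_parts (hj : 4 ≤ j) (hC : IsAdmissible (multiK j t) R B G)
    {f : Fin k × Fin 2 → Fin j × Fin t} (hf : Function.Injective f)
    (hsafe : ∀ i, NoAugmentingPath G ↑(univ.image f)ᶜ (f (i, 0)) (f (i, 1)))
    (hU : 2 < #(univ.image f)ᶜ) (hS : #((univ.image f)ᶜ.image Prod.fst) ≤ 2) : False := by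
  have hcard := card_unmatched_add hf
  set U := (univ.image f)ᶜ
  set S := U.image Prod.fst
  have hcount := card_touching_add_card_unmatched_le hf S
  rw [filter_true_of_mem fun a ha => mem_image_of_mem Prod.fst ha] at hcount
  have hsplit := card_filter_add_card_filter_not (s := univ) fun i : Fin k => ∃ b, (f (i, b)).1 ∈ S
  simp only [card_univ, Fintype.card_fin] at hsplit
  have := Nat.mul_le_mul_right t hj
  have := Nat.mul_le_mul_right t hS
  set E : Finset (Fin k) := {i | ¬∃ b, (f (i, b)).1 ∈ S}
  have hF : IsFan (multiK j t) G U f E := by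
    refine ⟨hf, by simp [U], fun i _ => hsafe i, fun a ha i hi b h => ?_⟩
    simp only [E, mem_coe, mem_filter, mem_univ, true_and, not_exists] at hi
    exact hi b (h ▸ mem_image_of_mem Prod.fst ha)
  obtain ⟨e₁, he₁, e₂, he₂, hne⟩ := one_lt_card.1 (show 1 < #E by omega)
  exact hF.false_of_two_edges hC hU he₁ he₂ hne

theorem contains_stripe_succ (hj : 4 ≤ j) (hjt : 2 * k + 3 ≤ j * t)
    (hC : IsAdmissible (multiK j t) R B G) (hM : Contains G (stripe k)) :
    Contains G (stripe (k + 1)) := by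
  classical
  by_contra hG
  obtain ⟨f, hf, hfG⟩ := contains_stripe_iff.1 hM
  have hfree : ∀ a ∈ (univ.image f)ᶜ, a ∉ Set.range f := by simp
  have hGU : ∀ a ∈ (univ.image f)ᶜ, ∀ b ∈ (univ.image f)ᶜ, ¬G.Adj a b := fun a ha b hb hab =>
    hG (contains_stripe_succ_of_adj hf hfG (hfree a ha) (hfree b hb) hab)
  have hsafe : ∀ i, NoAugmentingPath G ↑(univ.image f)ᶜ (f (i, 0)) (f (i, 1)) :=
    fun i a b ha hb hab hax hby =>
      hG (contains_stripe_succ_of_augmenting hf hfG (hfree a ha) (hfree b hb) hab i hax hby)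
  by_cases hS : 2 < #((univ.image f)ᶜ.image Prod.fst)
  · exact false_of_three_parts hj hC hf hGU hsafe hS
  · have := card_unmatched_add hf
    exact false_of_two_parts hj hC hf hsafe (by omega) (not_lt.1 hS)

end Multipartite

theorem isAdmissible_colorClass {α : Type*} {K : SimpleGraph α} {c : Sym2 α → Fin 3}
    (h₀ : ¬Contains (colorClass K c 0) (pathGraph 3))
    (h₁ : ¬Contains (colorClass K c 1) (pathGraph 4)) :
    IsAdmissible K (colorClass K c 0) (colorClass K c 1) (colorClass K c 2) := by
  refine ⟨fun a b h => ?_, h₀, h₁⟩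
  have : c s(a, b) = 0 ∨ c s(a, b) = 1 ∨ c s(a, b) = 2 := by
    generalize c s(a, b) = x
    fin_cases x <;> simp
  simp only [sup_adj, colorClass]
  tauto

theorem Arrows3.mono {j t t' m : ℕ} (h : Arrows3 j t m) (htt' : t ≤ t') : Arrows3 j t' m := by
  intro c
  let ι : Fin j × Fin t → Fin j × Fin t' := Prod.map id (Fin.castLE htt')
  have hι : Function.Injective ι :=
    Function.Injective.prodMap (fun _ _ => id) (Fin.castLE_injective htt')
  have transfer : ∀ (i : Fin 3) {β : Type} {H : SimpleGraph β},
      Contains (colorClass (multiK j t) (c ∘ Sym2.map ι) i) H →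
      Contains (colorClass (multiK j t') c i) H := fun i β H ⟨g, hg, hgH⟩ =>
    ⟨ι ∘ g, hι.comp hg, fun a b hab => hgH hab⟩
  exact (h (c ∘ Sym2.map ι)).imp (transfer 0) (Or.imp (transfer 1) (transfer 2))

theorem stmt8_general (j n : ℕ) (hj : 4 ≤ j)
    (h : IsLeast {t : ℕ | 0 < t ∧ Arrows3 j t (n - 1)} (2 * (n - 1) / j + 1)) :
    Arrows3 j (2 * n / j + 1) n := by
  have hM := h.1.2.mono (Nat.succ_le_succ (Nat.div_le_div_right (by omega : 2 * (n - 1) ≤ 2 * n)))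
  intro c
  refine or_iff_not_imp_left.2 fun h₀ => or_iff_not_imp_left.2 fun h₁ => ?_
  have hG := ((hM c).resolve_left h₀).resolve_left h₁
  cases n with
  | zero => exact hG -- `0 - 1 = 0` in `ℕ`
  | succ k =>
    have hjt := Nat.lt_mul_div_succ (2 * (k + 1)) (by omega : 0 < j)
    exact contains_stripe_succ hj (by omega) (isAdmissible_colorClass h₀ h₁) hG

theorem stmt8 (j n : ℕ) (hj : 4 ≤ j) (hn : 2 ≤ n)
    (h : IsLeast {t : ℕ | 0 < t ∧ Arrows3 j t (n - 1)} (2 * (n - 1) / j + 1)) :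
    Arrows3 j (2 * n / j + 1) n :=
  stmt8_general j n hj h
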